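/- arXiv:2312.06296 — 3 statements merged into one kernel-verified Lean document; each statement's English description precedes it below -/
import Mathlib

section
/- Let t : Fin n → A × B with n ≥ 2 model a bag relation with at least two distinct Y-values (so pdepY < 1), and let K be the number of distinct X-values of t. Define τ(t') := (pdep(t') − pdepY)/(1 − pdepY) for any relation t' with the same marginals. Then the average of τ(t_σ) over all n! permutations σ of Fin n equals (K−1)/(n−1). (Expected value of Goodman–Kruskal τ under random (X;Y)-permutations, Piatetsky-Shapiro–Matheus.) -/
/-!
For fixed `a` and `b`, the count of `(a, b)` in `t_σ` is `#{i ∈ S | σ i ∈ T}`, where `S` is the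
`X`-fibre of `a` and `T` the `Y`-fibre of `b`. For a uniformly random permutation `σ`, `σ i ∈ T`
has probability `|T|/n`, and `σ i, σ j ∈ T` (for `i ≠ j`) has probability
`|T|(|T|-1)/(n(n-1))`: right multiplication by a transposition shows that these numbers do not
depend on `i` (resp. on `j ≠ i`), and double counting gives their sums over `i` (resp. `j`).
Expanding the square of the count then gives
`E[pdep(t_σ)] = K/n + (n-K)/(n-1) · (pdepY - 1/n)`, and `E[pdep(t_σ)] - pdepY` factors as
`(K-1)/(n-1) · (1 - pdepY)`.
-/

namespace AFD

open Finset

variable {A B : Type*}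

/-- Number of indices with X-value `a`. -/
def c1 {n : ℕ} [DecidableEq A] (t : Fin n → A × B) (a : A) : ℕ :=
  (Finset.univ.filter fun i => (t i).1 = a).card

/-- Number of indices with Y-value `b`. -/
def c2 {n : ℕ} [DecidableEq B] (t : Fin n → A × B) (b : B) : ℕ :=
  (Finset.univ.filter fun i => (t i).2 = b).card

/-- Number of indices with tuple value `(a, b)`. -/
def cnt {n : ℕ} [DecidableEq A] [DecidableEq B] (t : Fin n → A × B) (a : A) (b : B) : ℕ :=
  (Finset.univ.filter fun i => t i = (a, b)).card

/-- Marginal probability of X-value `a`. -/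
noncomputable def p1 {n : ℕ} [DecidableEq A] (t : Fin n → A × B) (a : A) : ℝ :=
  (c1 t a : ℝ) / n

/-- Marginal probability of Y-value `b`. -/
noncomputable def p2 {n : ℕ} [DecidableEq B] (t : Fin n → A × B) (b : B) : ℝ :=
  (c2 t b : ℝ) / n

/-- Joint probability of `(a, b)`. -/
noncomputable def pJ {n : ℕ} [DecidableEq A] [DecidableEq B] (t : Fin n → A × B)
    (a : A) (b : B) : ℝ :=
  (cnt t a b : ℝ) / n

/-- Conditional probability of Y-value `b` given X-value `a` (with the `0/0 = 0` convention,
which is automatic for real division in Lean). -/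
noncomputable def pC {n : ℕ} [DecidableEq A] [DecidableEq B] (t : Fin n → A × B)
    (a : A) (b : B) : ℝ :=
  pJ t a b / p1 t a

/-- The set of distinct X-values. -/
def domX {n : ℕ} [DecidableEq A] (t : Fin n → A × B) : Finset A :=
  Finset.univ.image fun i => (t i).1

/-- The set of distinct Y-values. -/
def domY {n : ℕ} [DecidableEq B] (t : Fin n → A × B) : Finset B :=
  Finset.univ.image fun i => (t i).2

/-- The set of distinct tuples. -/
def domXY {n : ℕ} [DecidableEq A] [DecidableEq B] (t : Fin n → A × B) : Finset (A × B) :=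
  Finset.univ.image t

/-- The probabilistic dependency `pdep(X → Y)`. -/
noncomputable def pdep {n : ℕ} [DecidableEq A] [DecidableEq B] (t : Fin n → A × B) : ℝ :=
  ∑ a ∈ domX t, p1 t a * ∑ b ∈ domY t, (pC t a b) ^ 2

/-- The probabilistic self-dependency `pdep(Y)`. -/
noncomputable def pdepY {n : ℕ} [DecidableEq B] (t : Fin n → A × B) : ℝ :=
  ∑ b ∈ domY t, (p2 t b) ^ 2

/-- The (X;Y)-permutation of `t` induced by the permutation `σ`. -/
def permRel {n : ℕ} (t : Fin n → A × B) (σ : Equiv.Perm (Fin n)) : Fin n → A × B :=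
  fun i => ((t i).1, (t (σ i)).2)

/-- `t` satisfies the functional dependency X → Y. -/
def satFD {n : ℕ} (t : Fin n → A × B) : Prop :=
  ∀ i j, (t i).1 = (t j).1 → (t i).2 = (t j).2

section PermCounting

open Equiv

variable {α : Type*} [Fintype α] [DecidableEq α]

theorem card_perm_apply_mem (i : α) (T : Finset α) :
    (#{σ : Perm α | σ i ∈ T} : ℝ) = (Fintype.card α).factorial * #T / Fintype.card α := by
  have hconst : ∀ i', #{σ : Perm α | σ i' ∈ T} = #{σ : Perm α | σ i ∈ T} := fun i' =>
    card_equiv (Equiv.mulRight (swap i i')) (by simp [Perm.mul_apply])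
  have hsum : ∑ i', #{σ : Perm α | σ i' ∈ T} = (Fintype.card α).factorial * #T := by
    have hdouble := sum_card_bipartiteAbove_eq_sum_card_bipartiteBelow (s := (univ : Finset α))
      (t := (univ : Finset (Perm α))) (r := fun i' σ => σ i' ∈ T)
    simp only [bipartiteAbove, bipartiteBelow] at hdouble
    rw [hdouble, sum_congr rfl fun σ _ => card_equiv σ (t := T) (by simp), sum_const, card_univ,
      Fintype.card_perm, smul_eq_mul]
  simp only [hconst, sum_const, card_univ, smul_eq_mul] at hsum
  have hcard : (Fintype.card α : ℝ) ≠ 0 := Nat.cast_ne_zero.mpr (Fintype.card_pos_iff.mpr ⟨i⟩).ne'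
  rw [eq_div_iff hcard, mul_comm]
  exact_mod_cast hsum

theorem card_perm_apply_mem_and_apply_mem {i j : α} (hij : i ≠ j) (T : Finset α) :
    (#{σ : Perm α | σ i ∈ T ∧ σ j ∈ T} : ℝ) =
      (Fintype.card α).factorial * #T * (#T - 1) / (Fintype.card α * (Fintype.card α - 1)) := by
  set G : Finset (Perm α) := {σ | σ i ∈ T}
  have hconst : ∀ j' ∈ univ.erase i,
      #{σ ∈ G | σ j' ∈ T} = #{σ : Perm α | σ i ∈ T ∧ σ j ∈ T} := by
    intro j' hj'
    rw [filter_filter]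
    refine card_equiv (Equiv.mulRight (swap j j')) fun σ => ?_
    have : swap j j' i = i := swap_apply_of_ne_of_ne hij (ne_of_mem_erase hj').symm
    simp [Perm.mul_apply, this]
  have hsum : ∑ j' ∈ univ.erase i, (#{σ ∈ G | σ j' ∈ T} : ℝ) = #G * (#T - 1) := by
    have hdouble := sum_card_bipartiteAbove_eq_sum_card_bipartiteBelow (s := univ.erase i)
      (t := G) (r := fun j' σ => σ j' ∈ T)
    simp only [bipartiteAbove, bipartiteBelow] at hdouble
    calc ∑ j' ∈ univ.erase i, (#{σ ∈ G | σ j' ∈ T} : ℝ)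
        = ∑ σ ∈ G, (#{j' ∈ univ.erase i | σ j' ∈ T} : ℝ) := by exact_mod_cast hdouble
      _ = ∑ σ ∈ G, ((#T : ℝ) - 1) := sum_congr rfl fun σ hσ => by
        rw [filter_erase, cast_card_erase_of_mem (by simpa [G] using hσ),
          card_equiv σ (t := T) (by simp)]
      _ = #G * (#T - 1) := by rw [sum_const, nsmul_eq_mul]
  rw [sum_congr rfl fun j' hj' => congrArg Nat.cast (hconst j' hj'), sum_const,
    nsmul_eq_mul, cast_card_erase_of_mem (mem_univ i), card_univ, card_perm_apply_mem] at hsum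
  have hcard_sub_one : (#(univ.erase i) : ℝ) ≠ 0 :=
    Nat.cast_ne_zero.mpr (card_ne_zero_of_mem (mem_erase.mpr ⟨hij.symm, mem_univ j⟩))
  rw [cast_card_erase_of_mem (mem_univ i), card_univ] at hcard_sub_one
  have hcard : (Fintype.card α : ℝ) ≠ 0 := Nat.cast_ne_zero.mpr (Fintype.card_pos_iff.mpr ⟨i⟩).ne'
  field_simp at hsum ⊢
  linear_combination hsum

theorem sum_perm_card_filter_apply_mem_sq (S T : Finset α) :
    ∑ σ : Perm α, (#{i ∈ S | σ i ∈ T} : ℝ) ^ 2 =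
      (Fintype.card α).factorial * (#S * #T / Fintype.card α +
        #S * (#S - 1) * (#T * (#T - 1)) / (Fintype.card α * (Fintype.card α - 1))) := by
  have hsq : ∀ σ : Perm α, (#{i ∈ S | σ i ∈ T} : ℝ) ^ 2 =
      ∑ i ∈ S, ∑ j ∈ S, if σ i ∈ T ∧ σ j ∈ T then (1 : ℝ) else 0 := by
    intro σ
    simp only [natCast_card_filter, sq, sum_mul_sum, ite_and, ite_mul, one_mul, zero_mul]
  have hrow : ∀ i ∈ S, ∑ j ∈ S, (#{σ : Perm α | σ i ∈ T ∧ σ j ∈ T} : ℝ) =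
      (Fintype.card α).factorial * (#T / Fintype.card α +
        (#S - 1) * (#T * (#T - 1)) / (Fintype.card α * (Fintype.card α - 1))) := by
    intro i hi
    rw [← add_sum_erase _ _ hi, sum_congr rfl fun j hj =>
      card_perm_apply_mem_and_apply_mem (ne_of_mem_erase hj).symm T, sum_const,
      nsmul_eq_mul, cast_card_erase_of_mem hi]
    simp only [and_self, card_perm_apply_mem]
    ring
  simp only [hsq]
  rw [sum_comm]
  simp_rw [sum_comm (s := (univ : Finset (Perm α))), ← natCast_card_filter]
  rw [sum_congr rfl hrow, sum_const, nsmul_eq_mul]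
  ring

end PermCounting

variable {n : ℕ}

theorem cnt_permRel [DecidableEq A] [DecidableEq B] (t : Fin n → A × B)
    (σ : Equiv.Perm (Fin n)) (a : A) (b : B) :
    cnt (permRel t σ) a b = #{i ∈ {i | (t i).1 = a} | σ i ∈ ({i | (t i).2 = b} : Finset _)} := by
  simp [cnt, permRel, filter_filter, Prod.ext_iff]

theorem domY_permRel [DecidableEq B] (t : Fin n → A × B) (σ : Equiv.Perm (Fin n)) :
    domY (permRel t σ) = domY t := by
  ext b
  simp only [domY, permRel, mem_image, mem_univ, true_and]
  exact (σ.surjective.exists (p := fun i => (t i).2 = b)).symm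

theorem c1_pos [DecidableEq A] {t : Fin n → A × B} {a : A} (ha : a ∈ domX t) : 0 < c1 t a := by
  obtain ⟨i, -, rfl⟩ := mem_image.mp ha
  exact card_pos.mpr ⟨i, by simp⟩

theorem c2_pos [DecidableEq B] {t : Fin n → A × B} {b : B} (hb : b ∈ domY t) :
    0 < c2 t b := by
  obtain ⟨i, -, rfl⟩ := mem_image.mp hb
  exact card_pos.mpr ⟨i, by simp⟩

theorem sum_c1 [DecidableEq A] (t : Fin n → A × B) : ∑ a ∈ domX t, c1 t a = n :=
  (card_eq_sum_card_image _ _).symm.trans (card_fin n)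

theorem sum_c2 [DecidableEq B] (t : Fin n → A × B) : ∑ b ∈ domY t, c2 t b = n :=
  (card_eq_sum_card_image _ _).symm.trans (card_fin n)

theorem pdep_eq_sum_sum_cnt_sq [DecidableEq A] [DecidableEq B] (t : Fin n → A × B) :
    pdep t = ∑ a ∈ domX t, ∑ b ∈ domY t, (cnt t a b : ℝ) ^ 2 / (n * c1 t a) := by
  refine sum_congr rfl fun a ha => ?_
  have hc1 : (c1 t a : ℝ) ≠ 0 := Nat.cast_ne_zero.mpr (c1_pos ha).ne'
  rw [mul_sum]
  refine sum_congr rfl fun b _ => ?_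
  simp only [pC, pJ, p1]
  field_simp

theorem pdepY_eq_sum_c2_sq [DecidableEq B] (t : Fin n → A × B) :
    pdepY t = (∑ b ∈ domY t, (c2 t b : ℝ) ^ 2) / n ^ 2 := by
  simp only [pdepY, p2, div_pow, sum_div]

theorem sum_pdep_permRel [DecidableEq A] [DecidableEq B] (t : Fin n → A × B) :
    ∑ σ : Equiv.Perm (Fin n), pdep (permRel t σ) =
      n.factorial * ((domX t).card / n +
        (n - (domX t).card) / (n - 1) * (pdepY t - 1 / n)) := by
  rcases Nat.eq_zero_or_pos n with rfl | hn
  · simp [pdep, pdepY, domX, domY]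
  have hn' : (n : ℝ) ≠ 0 := Nat.cast_ne_zero.mpr hn.ne'
  have hterm : ∀ a ∈ domX t, ∀ b ∈ domY t,
      ∑ σ : Equiv.Perm (Fin n), (cnt (permRel t σ) a b : ℝ) ^ 2 / (n * c1 t a) =
        n.factorial / n ^ 2 * c2 t b +
          n.factorial / (n ^ 2 * (n - 1)) * (c1 t a - 1) * ((c2 t b) ^ 2 - c2 t b) := by
    intro a ha b _
    have hc1 : (c1 t a : ℝ) ≠ 0 := Nat.cast_ne_zero.mpr (c1_pos ha).ne'
    simp only [← sum_div, cnt_permRel]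
    rw [sum_perm_card_filter_apply_mem_sq, Fintype.card_fin]
    simp only [c1, c2] at hc1 ⊢
    field_simp
  calc ∑ σ : Equiv.Perm (Fin n), pdep (permRel t σ)
      = ∑ σ : Equiv.Perm (Fin n), ∑ a ∈ domX t, ∑ b ∈ domY t,
          (cnt (permRel t σ) a b : ℝ) ^ 2 / (n * c1 t a) := by
        simp only [pdep_eq_sum_sum_cnt_sq, domY_permRel]
        rfl
    _ = ∑ a ∈ domX t, ∑ b ∈ domY t, ∑ σ : Equiv.Perm (Fin n),
          (cnt (permRel t σ) a b : ℝ) ^ 2 / (n * c1 t a) := by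
        rw [sum_comm]
        exact sum_congr rfl fun a _ => sum_comm
    _ = n.factorial * ((domX t).card / n +
          (n - (domX t).card) / (n - 1) * (pdepY t - 1 / n)) := by
        have hc1 : ∑ a ∈ domX t, (c1 t a : ℝ) = n := by exact_mod_cast sum_c1 t
        have hc2 : ∑ b ∈ domY t, (c2 t b : ℝ) = n := by exact_mod_cast sum_c2 t
        have hc2sq : ∑ b ∈ domY t, (c2 t b : ℝ) ^ 2 = n ^ 2 * pdepY t := by
          rw [pdepY_eq_sum_c2_sq]
          field_simp
        simp only [sum_congr rfl fun a ha => sum_congr rfl (hterm a ha), sum_add_distrib,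
          ← mul_sum, ← sum_mul, sum_sub_distrib, hc1, hc2, hc2sq, sum_const, nsmul_eq_mul, mul_one]
        field_simp

theorem c2_lt_of_mem_of_ne [DecidableEq B] {t : Fin n → A × B} {b b' : B} (hb' : b' ∈ domY t)
    (hne : b' ≠ b) : c2 t b < n := by
  obtain ⟨i, -, rfl⟩ := mem_image.mp hb'
  exact (card_lt_card (filter_ssubset.mpr ⟨i, mem_univ i, hne⟩)).trans_eq (card_fin n)

theorem two_le_of_one_lt_card_domY [DecidableEq B] {t : Fin n → A × B}
    (hY : 1 < (domY t).card) : 2 ≤ n :=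
  hY.trans_le (card_image_le.trans (card_fin n).le)

theorem pdepY_lt_one [DecidableEq B] {t : Fin n → A × B} (hY : 1 < (domY t).card) :
    pdepY t < 1 := by
  have hn : (0 : ℝ) < n := by
    have := two_le_of_one_lt_card_domY hY
    positivity
  have hp2 : ∀ b ∈ domY t, p2 t b ^ 2 < p2 t b := fun b hb => by
    obtain ⟨b', hb', hne⟩ := exists_mem_ne hY b
    refine pow_lt_self_of_lt_one₀ (div_pos (by exact_mod_cast c2_pos hb) hn) ?_ one_lt_two
    exact (div_lt_one hn).mpr (by exact_mod_cast c2_lt_of_mem_of_ne hb' hne)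
  calc pdepY t < ∑ b ∈ domY t, p2 t b := sum_lt_sum_of_nonempty (card_pos.mp (by omega)) hp2
    _ = 1 := by
      simp only [p2, ← sum_div]
      rw [div_eq_one_iff_eq hn.ne']
      exact_mod_cast sum_c2 t

theorem expected_tau_under_permutations_general {A B : Type*} [DecidableEq A] [DecidableEq B]
    {n : ℕ} (t : Fin n → A × B) (hY : 1 < (domY t).card) :
    (∑ σ : Equiv.Perm (Fin n), (pdep (permRel t σ) - pdepY t) / (1 - pdepY t)) /
        (n.factorial : ℝ) =
      (((domX t).card : ℝ) - 1) / ((n : ℝ) - 1) := by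
  have hn : (2 : ℝ) ≤ n := by exact_mod_cast two_le_of_one_lt_card_domY hY
  have hn0 : (n : ℝ) ≠ 0 := by positivity
  have hn1 : (n : ℝ) - 1 ≠ 0 := by linarith
  have hY1 : 1 - pdepY t ≠ 0 := (sub_pos.mpr (pdepY_lt_one hY)).ne'
  rw [← sum_div, sum_sub_distrib, sum_pdep_permRel, sum_const, card_univ, Fintype.card_perm,
    Fintype.card_fin, nsmul_eq_mul]
  field_simp
  ring

/-- Expected value of Goodman–Kruskal τ under random (X;Y)-permutations
(Piatetsky-Shapiro–Matheus). -/
theorem expected_tau_under_permutations {A B : Type*} [DecidableEq A] [DecidableEq B]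
    {n : ℕ} (hn : 2 ≤ n) (t : Fin n → A × B) (hY : 1 < (domY t).card) :
    (∑ σ : Equiv.Perm (Fin n), (pdep (permRel t σ) - pdepY t) / (1 - pdepY t)) /
        (n.factorial : ℝ) =
      (((domX t).card : ℝ) - 1) / ((n : ℝ) - 1) :=
  expected_tau_under_permutations_general t hY

end AFD
end

section
/- Let t : Fin n → A × B with n ≥ 1 model a bag relation. Then pdep(t) ≥ pdepY, i.e. Σ_a p₁(a) · Σ_b p(b∣a)² ≥ Σ_b p₂(b)². (Probabilistic dependency dominates probabilistic self-dependency; equivalently, the Goodman–Kruskal τ is nonnegative.) -/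
/-!
Over the X-values `a` occurring in `t`, the marginal `p₂(b) = Σ_a p₁(a) · p(b∣a)` is an average
of the conditional probabilities with weights `p₁(a)`, so by convexity of the square
`p₂(b)² ≤ Σ_a p₁(a) · p(b∣a)²`. Summing over `b` and exchanging the two sums gives the claim.
-/

namespace AFD

open Finset

variable {A B : Type*}

theorem _root_.Finset.sq_sum_mul_le_sum_mul_sq_of_sum_le_one {ι : Type*} (s : Finset ι)
    {w : ι → ℝ} (x : ι → ℝ) (hw : ∀ i ∈ s, 0 ≤ w i) (hw₁ : ∑ i ∈ s, w i ≤ 1) :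
    (∑ i ∈ s, w i * x i) ^ 2 ≤ ∑ i ∈ s, w i * x i ^ 2 :=
  calc (∑ i ∈ s, w i * x i) ^ 2 ≤ (∑ i ∈ s, w i) * ∑ i ∈ s, w i * x i ^ 2 :=
        sum_sq_le_sum_mul_sum_of_sq_le_mul s hw (fun i hi => mul_nonneg (hw i hi) (sq_nonneg _))
          fun i _ => le_of_eq (by ring)
    _ ≤ ∑ i ∈ s, w i * x i ^ 2 :=
        mul_le_of_le_one_left (sum_nonneg fun i hi => mul_nonneg (hw i hi) (sq_nonneg _)) hw₁

theorem sum_c1_domX {n : ℕ} [DecidableEq A] (t : Fin n → A × B) :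
    ∑ a ∈ domX t, c1 t a = n := by
  simpa [domX, c1] using (card_eq_sum_card_image (fun i => (t i).1) univ).symm

theorem sum_cnt_domX {n : ℕ} [DecidableEq A] [DecidableEq B] (t : Fin n → A × B) (b : B) :
    ∑ a ∈ domX t, cnt t a b = c2 t b := by
  rw [c2, card_eq_sum_card_fiberwise fun i _ => mem_image_of_mem (fun i => (t i).1) (mem_univ i)]
  refine sum_congr rfl fun a _ => ?_
  simp only [cnt, filter_filter, Prod.ext_iff, and_comm]

theorem sum_p1_domX_le_one {n : ℕ} [DecidableEq A] (t : Fin n → A × B) :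
    ∑ a ∈ domX t, p1 t a ≤ 1 := by
  simp only [p1, ← sum_div, ← Nat.cast_sum, sum_c1_domX]
  exact div_self_le_one _

theorem sum_pJ_domX {n : ℕ} [DecidableEq A] [DecidableEq B] (t : Fin n → A × B) (b : B) :
    ∑ a ∈ domX t, pJ t a b = p2 t b := by
  simp only [pJ, p2, ← sum_div, ← Nat.cast_sum, sum_cnt_domX]

theorem p1_pos {n : ℕ} [DecidableEq A] (t : Fin n → A × B) {a : A} (ha : a ∈ domX t) :
    0 < p1 t a := by
  obtain ⟨i, -, rfl⟩ := mem_image.1 ha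
  have hc : 0 < c1 t (t i).1 := card_pos.2 ⟨i, mem_filter.2 ⟨mem_univ i, rfl⟩⟩
  exact div_pos (by exact_mod_cast hc) (by exact_mod_cast i.pos)

theorem p1_mul_pC {n : ℕ} [DecidableEq A] [DecidableEq B] (t : Fin n → A × B) {a : A}
    (ha : a ∈ domX t) (b : B) : p1 t a * pC t a b = pJ t a b :=
  mul_div_cancel₀ _ (p1_pos t ha).ne'

theorem sq_p2_le_sum_p1_mul_sq_pC {n : ℕ} [DecidableEq A] [DecidableEq B]
    (t : Fin n → A × B) (b : B) :
    p2 t b ^ 2 ≤ ∑ a ∈ domX t, p1 t a * pC t a b ^ 2 := by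
  rw [← sum_pJ_domX, ← sum_congr rfl fun a ha => p1_mul_pC t ha b]
  exact sq_sum_mul_le_sum_mul_sq_of_sum_le_one _ _ (fun a ha => (p1_pos t ha).le)
    (sum_p1_domX_le_one t)

theorem pdep_ge_pdepY_general {A B : Type*} [DecidableEq A] [DecidableEq B]
    {n : ℕ} (t : Fin n → A × B) :
    pdepY t ≤ pdep t :=
  calc pdepY t ≤ ∑ b ∈ domY t, ∑ a ∈ domX t, p1 t a * pC t a b ^ 2 :=
        sum_le_sum fun b _ => sq_p2_le_sum_p1_mul_sq_pC t b
    _ = pdep t := by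
        simp only [pdep, mul_sum]
        exact sum_comm

/-- Probabilistic dependency dominates probabilistic self-dependency:
`pdep(t) ≥ pdepY`; equivalently, the Goodman–Kruskal τ is nonnegative. -/
theorem pdep_ge_pdepY {A B : Type*} [DecidableEq A] [DecidableEq B]
    {n : ℕ} (hn : 1 ≤ n) (t : Fin n → A × B) :
    pdepY t ≤ pdep t :=
  pdep_ge_pdepY_general t

end AFD
end

section
/- Let t : Fin n → A × B with n ≥ 1 model a bag relation. The Shannon conditional entropy H(Y∣X) := −Σ_{(a,b)} p(a,b)·log(p(a,b)/p₁(a)) (sum over the image of t, natural logarithm) is zero if and only if t satisfies the FD X→Y. -/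
/-!
Since `c(a,b) ≤ c₁(a)`, every summand `p(a,b) · log (p(a,b) / p₁(a))` is nonpositive, so the
entropy vanishes iff every summand does. For a tuple `(a,b)` that occurs in `t` we have
`p(a,b) > 0`, so its summand vanishes iff `c(a,b) = c₁(a)`, i.e. iff every tuple with
X-value `a` has Y-value `b`.
-/

namespace AFD

open Finset

variable {A B : Type*}

theorem mul_log_div_nonpos {p q : ℝ} (hp : 0 ≤ p) (hpq : p ≤ q) : p * Real.log (p / q) ≤ 0 :=
  mul_nonpos_of_nonneg_of_nonpos hp <|
    Real.log_nonpos (div_nonneg hp (hp.trans hpq)) (div_le_one_of_le₀ hpq (hp.trans hpq))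

theorem mul_log_div_eq_zero_iff {p q : ℝ} (hp : 0 < p) (hpq : p ≤ q) :
    p * Real.log (p / q) = 0 ↔ p = q := by
  have hq : 0 < q := hp.trans_le hpq
  rw [mul_eq_zero, or_iff_right hp.ne', ← Real.log_one, ← div_eq_one_iff_eq hq.ne']
  exact Real.log_injOn_pos.eq_iff (div_pos hp hq) (Set.mem_Ioi.2 one_pos)

section Counts

variable [DecidableEq A] [DecidableEq B] {n : ℕ} (t : Fin n → A × B)

theorem filter_eq_pair_subset_filter_fst (a : A) (b : B) :
    (univ.filter fun i => t i = (a, b)) ⊆ univ.filter fun i => (t i).1 = a := by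
  intro i
  simp +contextual only [mem_filter, mem_univ, true_and, implies_true]

theorem cnt_le_c1 (a : A) (b : B) : cnt t a b ≤ c1 t a :=
  card_le_card (filter_eq_pair_subset_filter_fst t a b)

theorem cnt_eq_c1_iff (a : A) (b : B) :
    cnt t a b = c1 t a ↔ ∀ i, (t i).1 = a → (t i).2 = b := by
  constructor
  · intro h i hi
    have hfilter := eq_of_subset_of_card_le (filter_eq_pair_subset_filter_fst t a b) h.ge
    have hi' : i ∈ univ.filter fun i => t i = (a, b) := hfilter ▸ mem_filter.2 ⟨mem_univ i, hi⟩
    simp [(mem_filter.1 hi').2]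
  · intro h
    refine congrArg card (filter_congr fun i _ => ⟨fun hi => by simp [hi], fun hi => ?_⟩)
    exact Prod.ext hi (h i hi)

theorem satFD_iff_forall_cnt_eq_c1 :
    satFD t ↔ ∀ i, cnt t (t i).1 (t i).2 = c1 t (t i).1 := by
  simp only [cnt_eq_c1_iff]
  exact ⟨fun h i j hj => h j i hj, fun h i j hi => h j i hi⟩

theorem pJ_nonneg (a : A) (b : B) : 0 ≤ pJ t a b := by
  unfold pJ
  positivity

theorem pJ_le_p1 (a : A) (b : B) : pJ t a b ≤ p1 t a :=
  div_le_div_of_nonneg_right (by exact_mod_cast cnt_le_c1 t a b) n.cast_nonneg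

theorem pJ_pos (i : Fin n) : 0 < pJ t (t i).1 (t i).2 := by
  have hcnt : 0 < cnt t (t i).1 (t i).2 := card_pos.2 ⟨i, by simp⟩
  have hn : 0 < n := i.pos
  unfold pJ
  positivity

theorem pJ_eq_p1_iff (hn : n ≠ 0) (a : A) (b : B) : pJ t a b = p1 t a ↔ cnt t a b = c1 t a := by
  unfold pJ p1
  rw [div_left_inj' (Nat.cast_ne_zero.2 hn), Nat.cast_inj]

end Counts

theorem shannon_conditional_entropy_eq_zero_iff_satFD_general
    {A B : Type*} [DecidableEq A] [DecidableEq B]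
    {n : ℕ} (t : Fin n → A × B) :
    (-∑ ab ∈ domXY t, pJ t ab.1 ab.2 * Real.log (pJ t ab.1 ab.2 / p1 t ab.1)) = 0 ↔
      satFD t := by
  have hterm : ∀ ab ∈ domXY t, pJ t ab.1 ab.2 * Real.log (pJ t ab.1 ab.2 / p1 t ab.1) ≤ 0 :=
    fun ab _ => mul_log_div_nonpos (pJ_nonneg t _ _) (pJ_le_p1 t _ _)
  rw [neg_eq_zero, sum_eq_zero_iff_of_nonpos hterm, domXY, forall_mem_image,
    satFD_iff_forall_cnt_eq_c1]
  refine forall_congr' fun i => ?_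
  rw [imp_iff_right (mem_univ i), mul_log_div_eq_zero_iff (pJ_pos t i) (pJ_le_p1 t _ _),
    pJ_eq_p1_iff t i.pos.ne']

/-- The Shannon conditional entropy `H(Y∣X)` is zero iff `t` satisfies the FD X→Y. -/
theorem shannon_conditional_entropy_eq_zero_iff_satFD
    {A B : Type*} [DecidableEq A] [DecidableEq B]
    {n : ℕ} (hn : 1 ≤ n) (t : Fin n → A × B) :
    (-∑ ab ∈ domXY t, pJ t ab.1 ab.2 * Real.log (pJ t ab.1 ab.2 / p1 t ab.1)) = 0 ↔
      satFD t :=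
  shannon_conditional_entropy_eq_zero_iff_satFD_general t

end AFD
end
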